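/- In the full-information line framework, suppose the mechanism (ρ, W) has distortion strictly smaller than 3, i.e., max(SW(I,0), SW(I,1)) < 3·SW(I, win(I)) for every instance I. Then for every integer ℓ ≥ 1, W applied to the multiset consisting of ℓ copies of the pair (0,1) and ℓ+1 copies of the pair (1,1) equals 1 (alternative 1 must win whenever ℓ size-one groups are represented by 0 and ℓ+1 size-one groups are represented by 1). -/
import Mathlib


/-! Full-information line framework: the two alternatives are the reals 0 and 1.
A group is a finite nonempty multiset of reals in `[0,1]`; an instance is a finite
nonempty multiset of groups. -/

/-- Social welfare of alternative `x` in instance `I`. -/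
noncomputable def SWfull (I : Multiset (Multiset ℝ)) (x : ℝ) : ℝ :=
  (I.map (fun S => (S.map (fun p => |p - x|)).sum)).sum

/-- Winner of instance `I` under the mechanism `(ρ, W)`: `W` applied to the multiset of
pairs (representative, group size). -/
noncomputable def winFull (ρ : Multiset ℝ → ℝ) (W : Multiset (ℝ × ℕ) → ℝ)
    (I : Multiset (Multiset ℝ)) : ℝ :=
  W (I.map (fun S => (ρ S, Multiset.card S)))

/-- A valid instance: a finite nonempty multiset of nonempty groups of reals in `[0,1]`. -/
def ValidInstanceFull (I : Multiset (Multiset ℝ)) : Prop :=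
  I ≠ 0 ∧ ∀ S ∈ I, S ≠ 0 ∧ ∀ p ∈ S, p ∈ Set.Icc (0 : ℝ) 1

/-- A valid full-information distributed mechanism: `ρ` assigns to every group a
representative in `{0,1}`, and `W` assigns to every finite nonempty multiset of pairs
(representative, positive group size) a winner occurring as a first component. -/
def ValidMechFull (ρ : Multiset ℝ → ℝ) (W : Multiset (ℝ × ℕ) → ℝ) : Prop :=
  (∀ S : Multiset ℝ, S ≠ 0 → (∀ p ∈ S, p ∈ Set.Icc (0 : ℝ) 1) → ρ S = 0 ∨ ρ S = 1) ∧
  (∀ m : Multiset (ℝ × ℕ), m ≠ 0 → (∀ q ∈ m, (q.1 = 0 ∨ q.1 = 1) ∧ 0 < q.2) →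
    W m ∈ m.map Prod.fst)

open Multiset

lemma sw_two (a b : ℝ) (k m : ℕ) (x : ℝ) :
    SWfull (replicate k ({a} : Multiset ℝ) + replicate m {b}) x
      = k * |a - x| + m * |b - x| := by
  simp [SWfull, Multiset.map_replicate, Multiset.sum_replicate, nsmul_eq_mul]

lemma valid_two (a b : ℝ) (ha : a ∈ Set.Icc (0:ℝ) 1) (hb : b ∈ Set.Icc (0:ℝ) 1)
    (k m : ℕ) (hm : m ≠ 0) :
    ValidInstanceFull (replicate k ({a} : Multiset ℝ) + replicate m {b}) := by
  constructor
  · intro h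
    apply_fun Multiset.card at h
    simp [Multiset.card_replicate] at h
    omega
  · intro S hS
    rw [Multiset.mem_add] at hS
    have hS' : S = {a} ∨ S = {b} := by
      rcases hS with h | h
      · exact Or.inl (Multiset.eq_of_mem_replicate h)
      · exact Or.inr (Multiset.eq_of_mem_replicate h)
    rcases hS' with rfl | rfl
    · exact ⟨by simp, by intro p hp; rw [Multiset.mem_singleton] at hp; subst hp; exact ha⟩
    · exact ⟨by simp, by intro p hp; rw [Multiset.mem_singleton] at hp; subst hp; exact hb⟩

lemma win_two (ρ : Multiset ℝ → ℝ) (W : Multiset (ℝ × ℕ) → ℝ) (a b : ℝ) (k m : ℕ) :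
    winFull ρ W (replicate k ({a} : Multiset ℝ) + replicate m {b})
      = W (replicate k (ρ {a}, 1) + replicate m (ρ {b}, 1)) := by
  simp [winFull, Multiset.map_replicate]

lemma rho_single (ρ : Multiset ℝ → ℝ) (W : Multiset (ℝ × ℕ) → ℝ)
    (hmech : ValidMechFull ρ W)
    (hdist : ∀ I : Multiset (Multiset ℝ), ValidInstanceFull I →
      max (SWfull I 0) (SWfull I 1) < 3 * SWfull I (winFull ρ W I))
    (p : ℝ) (hp : p ∈ Set.Icc (0:ℝ) 1) :
    (ρ {p} = 0 → 1/4 < p) ∧ (ρ {p} = 1 → p < 3/4) := by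
  have hrp : ρ {p} = 0 ∨ ρ {p} = 1 := by
    apply hmech.1 _ (by simp)
    intro q hq; rw [Multiset.mem_singleton] at hq; subst hq; exact hp
  set I : Multiset (Multiset ℝ) := replicate 0 ({p} : Multiset ℝ) + replicate 1 {p} with hI
  have hv : ValidInstanceFull I := valid_two p p hp hp 0 1 one_ne_zero
  have hwin : winFull ρ W I = ρ {p} := by
    rw [hI, win_two]
    have := hmech.2 (replicate 0 ((ρ {p}), 1) + replicate 1 ((ρ {p}), 1))
      (by simp) (by
        intro q hq
        simp only [Multiset.replicate_zero, zero_add, Multiset.replicate_one,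
          Multiset.mem_singleton] at hq
        subst hq
        exact ⟨hrp, one_pos⟩)
    simpa using this
  have hd := hdist I hv
  rw [hwin] at hd
  have h0 : SWfull I 0 = p := by
    rw [hI, sw_two]; rw [sub_zero, abs_of_nonneg hp.1]; push_cast; ring
  have h1 : SWfull I 1 = 1 - p := by
    rw [hI, sw_two]
    rw [abs_of_nonpos (by linarith [hp.2] : p - 1 ≤ 0)]; push_cast; ring
  constructor
  · intro h
    rw [h, h0, h1] at hd
    linarith [lt_of_le_of_lt (le_max_right p (1-p)) hd]
  · intro h
    rw [h, h0, h1] at hd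
    linarith [lt_of_le_of_lt (le_max_left p (1-p)) hd]

lemma engine (ρ : Multiset ℝ → ℝ) (W : Multiset (ℝ × ℕ) → ℝ)
    (hdist : ∀ I : Multiset (Multiset ℝ), ValidInstanceFull I →
      max (SWfull I 0) (SWfull I 1) < 3 * SWfull I (winFull ρ W I))
    {a b : ℝ} (ha : a ∈ Set.Icc (0:ℝ) 1) (hb : b ∈ Set.Icc (0:ℝ) 1)
    (hra : ρ {a} = 0) (hrb : ρ {b} = 1) (k m : ℕ) (hm : m ≠ 0) :
    (W (replicate k ((0:ℝ), (1:ℕ)) + replicate m ((1:ℝ), (1:ℕ))) = 0 →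
      (k:ℝ)*(1-a) + m*(1-b) < 3*((k:ℝ)*a + m*b)) ∧
    (W (replicate k ((0:ℝ), (1:ℕ)) + replicate m ((1:ℝ), (1:ℕ))) = 1 →
      (k:ℝ)*a + m*b < 3*((k:ℝ)*(1-a) + m*(1-b))) := by
  set I : Multiset (Multiset ℝ) := replicate k ({a} : Multiset ℝ) + replicate m {b} with hI
  have hv : ValidInstanceFull I := valid_two a b ha hb k m hm
  have hwin : winFull ρ W I
      = W (replicate k ((0:ℝ), (1:ℕ)) + replicate m ((1:ℝ), (1:ℕ))) := by
    rw [hI, win_two, hra, hrb]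
  have hd := hdist I hv
  rw [hwin] at hd
  have h0 : SWfull I 0 = (k:ℝ)*a + m*b := by
    rw [hI, sw_two, sub_zero, sub_zero, abs_of_nonneg ha.1, abs_of_nonneg hb.1]
  have h1 : SWfull I 1 = (k:ℝ)*(1-a) + m*(1-b) := by
    rw [hI, sw_two, abs_of_nonpos (by linarith [ha.2] : a - 1 ≤ 0),
      abs_of_nonpos (by linarith [hb.2] : b - 1 ≤ 0)]
    ring
  constructor
  · intro h
    rw [h, h0, h1] at hd
    exact lt_of_le_of_lt (le_max_right _ _) hd
  · intro h
    rw [h, h0, h1] at hd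
    exact lt_of_le_of_lt (le_max_left _ _) hd

lemma Wmem (ρ : Multiset ℝ → ℝ) (W : Multiset (ℝ × ℕ) → ℝ)
    (hmech : ValidMechFull ρ W) (k m : ℕ) (h : m ≠ 0) :
    W (replicate k ((0:ℝ), (1:ℕ)) + replicate m ((1:ℝ), (1:ℕ))) = 0 ∨
    W (replicate k ((0:ℝ), (1:ℕ)) + replicate m ((1:ℝ), (1:ℕ))) = 1 := by
  have hne : (replicate k ((0:ℝ), (1:ℕ)) + replicate m ((1:ℝ), (1:ℕ))) ≠ 0 := by
    intro hh
    apply_fun Multiset.card at hh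
    simp [Multiset.card_replicate] at hh
    omega
  have := hmech.2 _ hne (by
    intro q hq
    rw [Multiset.mem_add] at hq
    rcases hq with hq | hq <;>
      rw [Multiset.eq_of_mem_replicate hq] <;> simp)
  rw [Multiset.map_add, Multiset.map_replicate, Multiset.map_replicate, Multiset.mem_add] at this
  rcases this with h' | h'
  · exact Or.inl (Multiset.eq_of_mem_replicate h')
  · exact Or.inr (Multiset.eq_of_mem_replicate h')

lemma rho_in (ρ : Multiset ℝ → ℝ) (W : Multiset (ℝ × ℕ) → ℝ)
    (hmech : ValidMechFull ρ W) (p : ℝ) (hp : p ∈ Set.Icc (0:ℝ) 1) :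
    ρ {p} = 0 ∨ ρ {p} = 1 := by
  apply hmech.1 _ (by simp)
  intro q hq; rw [Multiset.mem_singleton] at hq; subst hq; exact hp

/-- Any full-information mechanism with distortion strictly smaller
than 3 must choose alternative 1 as the winner whenever `ℓ` size-one groups are
represented by 0 and `ℓ+1` size-one groups are represented by 1, for every `ℓ ≥ 1`. -/
theorem full_info_majority_wins
    (ρ : Multiset ℝ → ℝ) (W : Multiset (ℝ × ℕ) → ℝ)
    (hmech : ValidMechFull ρ W)
    (hdist : ∀ I : Multiset (Multiset ℝ), ValidInstanceFull I →
      max (SWfull I 0) (SWfull I 1) < 3 * SWfull I (winFull ρ W I)) :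
    ∀ ℓ : ℕ, 1 ≤ ℓ →
      W (Multiset.replicate ℓ ((0 : ℝ), (1 : ℕ)) +
         Multiset.replicate (ℓ + 1) ((1 : ℝ), (1 : ℕ))) = 1 := by
  have q14 : ρ {(1/4 : ℝ)} = 1 := by
    rcases rho_in ρ W hmech (1/4) (by norm_num) with h | h
    · exfalso; linarith [(rho_single ρ W hmech hdist (1/4) (by norm_num)).1 h]
    · exact h
  have q34 : ρ {(3/4 : ℝ)} = 0 := by
    rcases rho_in ρ W hmech (3/4) (by norm_num) with h | h
    · exact h
    · exfalso; linarith [(rho_single ρ W hmech hdist (3/4) (by norm_num)).2 h]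
  intro ℓ hℓ
  induction ℓ, hℓ using Nat.le_induction with
  | base =>
    by_contra hW
    have hW0 : W (replicate 1 ((0:ℝ), (1:ℕ)) + replicate 2 ((1:ℝ), (1:ℕ))) = 0 := by
      rcases Wmem ρ W hmech 1 2 (by norm_num) with h | h
      · exact h
      · exact absurd h hW
    rcases rho_in ρ W hmech 0 (by norm_num) with h | h
    · have := (engine ρ W hdist (a := 0) (b := 1/4) (by norm_num) (by norm_num)
        h q14 1 2 (by norm_num)).1 hW0
      norm_num at this
    · have := (engine ρ W hdist (a := 3/4) (b := 0) (by norm_num) (by norm_num)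
        q34 h 1 2 (by norm_num)).1 hW0
      norm_num at this
  | succ n hn IH =>
    by_contra hW
    have hW0 : W (replicate (n+1) ((0:ℝ), (1:ℕ)) + replicate (n+1+1) ((1:ℝ), (1:ℕ))) = 0 := by
      rcases Wmem ρ W hmech (n+1) (n+1+1) (by omega) with h | h
      · exact h
      · exact absurd h hW
    have hcast : (0:ℝ) ≤ (n:ℝ) := Nat.cast_nonneg n
    have hN1 : (1:ℝ) ≤ (n:ℝ) := by exact_mod_cast hn
    obtain ⟨t, htmem, ht4⟩ : ∃ t : ℝ, t ∈ Set.Icc (0:ℝ) 1 ∧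
        4 * ((n:ℝ)+1) * t = 2 * ((n:ℝ)+1) + 1 := by
      refine ⟨(2*((n:ℝ)+1) + 1) / (4*((n:ℝ)+1)), ⟨by positivity, ?_⟩, by field_simp⟩
      rw [div_le_one (by positivity)]; linarith
    -- Step 1: rho {0} = 1
    have hρ0 : ρ {(0:ℝ)} = 1 := by
      rcases rho_in ρ W hmech 0 (by norm_num) with h | h
      · exfalso
        have := (engine ρ W hdist (a := 0) (b := 1/4) (by norm_num) (by norm_num)
          h q14 (n+1) (n+1+1) (by omega)).1 hW0
        push_cast at this
        linarith
      · exact h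
    -- Step 2: rho {t} = 1
    have hρt : ρ {t} = 1 := by
      rcases rho_in ρ W hmech t htmem with h | h
      · exfalso
        have := (engine ρ W hdist (a := t) (b := 0) htmem (by norm_num)
          h hρ0 (n+1) (n+1+1) (by omega)).1 hW0
        push_cast at this
        nlinarith [ht4]
      · exact h
    -- Step 3: cases on rho {1}
    rcases rho_in ρ W hmech 1 (by norm_num) with h | h
    · -- rho {1} = 0 : use instance (n copies of {1}) + (n+1 copies of {t})
      have := (engine ρ W hdist (a := 1) (b := t) (by norm_num) htmem
        h hρt n (n+1) (by omega)).2 IH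
      push_cast at this
      nlinarith [ht4]
    · -- rho {1} = 1 : use instance (n copies of {3/4}) + (n+1 copies of {1})
      have := (engine ρ W hdist (a := 3/4) (b := 1) (by norm_num) (by norm_num)
        q34 h n (n+1) (by omega)).2 IH
      push_cast at this
      linarith
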